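/- Fix integers m, M, p ≥ 1. With the setting, notation, and hypotheses on r, v, P as in the hierarchical-voting setup, let C := {0,1}^m \ (A ∪ B) be the set of strongly incorrect query strings, i.e. those y for which there exists i with v(i, y₁⋯y_{i−1}) = NO and y_i = 1. Then Σ_{y ∈ C} P(y) ≤ 2^m / 2^p. -/
import Mathlib


/-- Labels of queries: a valid YES instance, a valid NO instance, or an invalid
(promise-violating) instance. -/
inductive QLabel where
  | yes : QLabel
  | no : QLabel
  | inv : QLabel
deriving DecidableEq

/-- The prefix `y₁⋯y_{i−1}` of a query string `y` (here zero-indexed). -/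
def prefixOf {m : ℕ} (y : Fin m → Bool) (i : Fin m) : Fin i → Bool :=
  fun j => y ⟨j, j.isLt.trans i.isLt⟩

/-- `P(y) = Π_i (r(i, y₁⋯y_{i−1})` if `y_i = 1` else `1 − r(i, y₁⋯y_{i−1}))`: the
probability that the guessing phase produces query string `y`. -/
noncomputable def guessProb (m : ℕ) (r : (i : Fin m) → (Fin i → Bool) → ℝ)
    (y : Fin m → Bool) : ℝ :=
  ∏ i : Fin m, if y i then r i (prefixOf y i) else 1 - r i (prefixOf y i)

/-- `y` is a strongly incorrect query string: some bit of `y` answers `1` on a valid NO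
query. These are exactly the strings in `C = {0,1}^m \ (A ∪ B)`. -/
def IsStronglyIncorrect (m : ℕ) (v : (i : Fin m) → (Fin i → Bool) → QLabel)
    (y : Fin m → Bool) : Prop :=
  ∃ i : Fin m, v i (prefixOf y i) = QLabel.no ∧ y i = true

instance (m : ℕ) (v : (i : Fin m) → (Fin i → Bool) → QLabel) :
    DecidablePred (IsStronglyIncorrect m v) := fun y => by
  unfold IsStronglyIncorrect; infer_instance

/-- The total probability of guessing a strongly incorrect query string is at most
`2^m/2^p`. -/
theorem strongly_incorrect_probability_bound (m M p : ℕ)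
    (hm : 1 ≤ m) (hM : 1 ≤ M) (hp : 1 ≤ p)
    (r : (i : Fin m) → (Fin i → Bool) → ℝ)
    (v : (i : Fin m) → (Fin i → Bool) → QLabel)
    (hr0 : ∀ i w, 0 ≤ r i w) (hr1 : ∀ i w, r i w ≤ 1)
    (hyes : ∀ i w, v i w = QLabel.yes → (1 - 1 / 2 ^ p : ℝ) / 2 ^ M ≤ r i w)
    (hno : ∀ i w, v i w = QLabel.no → r i w ≤ (1 / 2 ^ p : ℝ)) :
    ∑ y ∈ Finset.univ.filter (IsStronglyIncorrect m v), guessProb m r y ≤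
      (2 : ℝ) ^ m / 2 ^ p := by
  set f := fun (y : Fin m → Bool) (j : Fin m) =>
    if y j then r j (prefixOf y j) else 1 - r j (prefixOf y j) with hf
  have hf0 : ∀ y j, 0 ≤ f y j := by
    intro y j; simp only [hf]; split
    · exact hr0 _ _
    · linarith [hr1 j (prefixOf y j)]
  have hf1 : ∀ y j, f y j ≤ 1 := by
    intro y j; simp only [hf]; split
    · exact hr1 _ _
    · linarith [hr0 j (prefixOf y j)]
  have hbound : ∀ y ∈ Finset.univ.filter (IsStronglyIncorrect m v),
      guessProb m r y ≤ (1 : ℝ) / 2 ^ p := by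
    intro y hy
    rw [Finset.mem_filter] at hy
    obtain ⟨-, i, hvi, hyi⟩ := hy
    have h1 : guessProb m r y = f y i * ∏ j ∈ Finset.univ.erase i, f y j :=
      (Finset.mul_prod_erase _ _ (Finset.mem_univ i)).symm
    have h2 : ∏ j ∈ Finset.univ.erase i, f y j ≤ 1 :=
      Finset.prod_le_one (fun j _ => hf0 y j) (fun j _ => hf1 y j)
    have h3 : f y i ≤ (1 : ℝ) / 2 ^ p := by
      simp only [hf, hyi, if_true]
      exact hno i _ hvi
    calc guessProb m r y = f y i * ∏ j ∈ Finset.univ.erase i, f y j := h1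
      _ ≤ f y i := mul_le_of_le_one_right (hf0 y i) h2
      _ ≤ (1 : ℝ) / 2 ^ p := h3
  calc ∑ y ∈ Finset.univ.filter (IsStronglyIncorrect m v), guessProb m r y
      ≤ ∑ _y ∈ Finset.univ.filter (IsStronglyIncorrect m v), (1 : ℝ) / 2 ^ p :=
        Finset.sum_le_sum hbound
    _ = (Finset.univ.filter (IsStronglyIncorrect m v)).card * ((1 : ℝ) / 2 ^ p) := by
        rw [Finset.sum_const, nsmul_eq_mul]
    _ ≤ (2 : ℝ) ^ m * ((1 : ℝ) / 2 ^ p) := by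
        apply mul_le_mul_of_nonneg_right _ (by positivity)
        have := Finset.card_filter_le Finset.univ (IsStronglyIncorrect m v)
        have hcard : (Finset.univ : Finset (Fin m → Bool)).card = 2 ^ m := by
          simp [Finset.card_univ]
        calc ((Finset.univ.filter (IsStronglyIncorrect m v)).card : ℝ)
            ≤ ((Finset.univ : Finset (Fin m → Bool)).card : ℝ) := by exact_mod_cast this
          _ = (2 : ℝ) ^ m := by rw [hcard]; push_cast; ring
    _ = (2 : ℝ) ^ m / 2 ^ p := by ring
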